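/- For all x ≥ 0 and t ≥ 0, the derivative of the Riccati flow satisfies ϖ(x)² ≤ e^{λt}·∂φ_t(x)/∂x ≤ ϖ², where ϖ := 1 − ϖ₊/ϖ₋ and ϖ(x) := 1 − (max(ϖ₊, x) − ϖ₊)/(max(ϖ₊, x) − ϖ₋). -/

import Mathlib

noncomputable def lam (A R S : ℝ) : ℝ := 2 * Real.sqrt (A ^ 2 + R * S)

noncomputable def wplus (A R S : ℝ) : ℝ := (A + lam A R S / 2) / S

noncomputable def wminus (A R S : ℝ) : ℝ := (A - lam A R S / 2) / S

/-- The closed-form Riccati semigroup `φ_t(x)`. -/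
noncomputable def phi (A R S t x : ℝ) : ℝ :=
  wplus A R S +
    (x - wplus A R S) * ((wplus A R S - wminus A R S) * Real.exp (-(lam A R S) * t)) /
      ((wplus A R S - wminus A R S) * Real.exp (-(lam A R S) * t) +
        (x - wminus A R S) * (1 - Real.exp (-(lam A R S) * t)))

/-- `ϖ = 1 - ϖ₊/ϖ₋`. -/
noncomputable def vpi (A R S : ℝ) : ℝ := 1 - wplus A R S / wminus A R S

/-- `ϖ(x) = 1 - (max(ϖ₊,x) - ϖ₊)/(max(ϖ₊,x) - ϖ₋)`. -/
noncomputable def vpix (A R S x : ℝ) : ℝ :=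
  1 - (max (wplus A R S) x - wplus A R S) / (max (wplus A R S) x - wminus A R S)

/-!
For fixed `t`, `φ_t` is a Möbius map of `x`, so `e^{λt} ∂ₓφ_t(x) = ((ϖ₊ - ϖ₋) / D)²` where
`D = ϖ₊ e^{-λt} + x (1 - e^{-λt}) - ϖ₋` is its denominator. For `t ≥ 0` the first two terms of `D`
form a convex combination of `ϖ₊` and `x`, so for `x ≥ 0` we get `-ϖ₋ ≤ D ≤ max(ϖ₊, x) - ϖ₋`,
and the two bounds are exactly the squares `ϖ²` and `ϖ(x)²`.
-/

open Real

lemma lam_nonneg (A R S : ℝ) : 0 ≤ lam A R S := by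
  unfold lam
  positivity

lemma abs_lt_half_lam (A : ℝ) {R S : ℝ} (hR : 0 < R) (hS : 0 < S) : |A| < lam A R S / 2 := by
  rw [lam, mul_div_cancel_left₀ _ two_ne_zero, ← sqrt_sq_eq_abs]
  exact sqrt_lt_sqrt (sq_nonneg A) (by nlinarith [mul_pos hR hS])

lemma wplus_pos (A : ℝ) {R S : ℝ} (hR : 0 < R) (hS : 0 < S) : 0 < wplus A R S :=
  div_pos (by linarith [neg_abs_le A, abs_lt_half_lam A hR hS]) hS

lemma wminus_neg (A : ℝ) {R S : ℝ} (hR : 0 < R) (hS : 0 < S) : wminus A R S < 0 :=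
  div_neg_of_neg_of_pos (by linarith [le_abs_self A, abs_lt_half_lam A hR hS]) hS

lemma vpi_eq {A R S : ℝ} (hb : wminus A R S ≠ 0) :
    vpi A R S = (wplus A R S - wminus A R S) / -wminus A R S := by
  rw [vpi, div_neg, sub_div, div_self hb]
  ring

lemma vpix_eq {A R S : ℝ} (hab : wminus A R S < wplus A R S) (x : ℝ) :
    vpix A R S x = (wplus A R S - wminus A R S) / (max (wplus A R S) x - wminus A R S) := by
  have hm : max (wplus A R S) x - wminus A R S ≠ 0 := by
    linarith [le_max_left (wplus A R S) x]
  rw [vpix, one_sub_div hm, sub_sub_sub_cancel_left]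

noncomputable def phiDenom (A R S t x : ℝ) : ℝ :=
  (wplus A R S - wminus A R S) * exp (-(lam A R S) * t) +
    (x - wminus A R S) * (1 - exp (-(lam A R S) * t))

lemma hasDerivAt_phi {A R S t x : ℝ} (hD : phiDenom A R S t x ≠ 0) :
    HasDerivAt (phi A R S t)
      ((wplus A R S - wminus A R S) ^ 2 * exp (-(lam A R S) * t) / phiDenom A R S t x ^ 2) x := by
  set a := wplus A R S
  set b := wminus A R S
  set E := exp (-(lam A R S) * t)
  have hDdef : phiDenom A R S t x = (a - b) * E + (x - b) * (1 - E) := rfl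
  rw [hDdef] at hD ⊢
  have hnum : HasDerivAt (fun y => (y - a) * ((a - b) * E)) (1 * ((a - b) * E)) x :=
    ((hasDerivAt_id x).sub_const a).mul_const _
  have hden : HasDerivAt (fun y => (a - b) * E + (y - b) * (1 - E)) (1 * (1 - E)) x := by
    simpa using (((hasDerivAt_id x).sub_const b).mul_const (1 - E)).const_add ((a - b) * E)
  refine ((hnum.div hden hD).const_add a).congr_deriv ?_
  field_simp
  ring

lemma exp_mul_deriv_phi {A R S t x : ℝ} (hD : phiDenom A R S t x ≠ 0) :
    exp (lam A R S * t) * deriv (fun y => phi A R S t y) x =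
      ((wplus A R S - wminus A R S) / phiDenom A R S t x) ^ 2 := by
  rw [(hasDerivAt_phi hD).deriv, mul_div_assoc', mul_left_comm, ← exp_add,
    show lam A R S * t + -lam A R S * t = 0 by ring, exp_zero, mul_one, div_pow]

lemma phiDenom_mem_Icc (A R S : ℝ) {t : ℝ} (ht : 0 ≤ t) (x : ℝ) :
    phiDenom A R S t x ∈
      Set.Icc (min (wplus A R S) x - wminus A R S) (max (wplus A R S) x - wminus A R S) := by
  set E := exp (-(lam A R S) * t)
  have hE0 : 0 ≤ E := (exp_pos _).le
  have hE1 : E ≤ 1 := exp_le_one_iff.mpr (by nlinarith [lam_nonneg A R S])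
  have hcombo : E • wplus A R S + (1 - E) • x ∈ Set.uIcc (wplus A R S) x :=
    convex_uIcc _ _ Set.left_mem_uIcc Set.right_mem_uIcc hE0 (sub_nonneg.mpr hE1) (by ring)
  have hD : phiDenom A R S t x = (E • wplus A R S + (1 - E) • x) - wminus A R S := by
    rw [phiDenom, smul_eq_mul, smul_eq_mul]
    ring
  rw [hD]
  exact ⟨sub_le_sub_right hcombo.1 _, sub_le_sub_right hcombo.2 _⟩

theorem riccati_flow_derivative_bounds (A R S : ℝ) (hR : 0 < R) (hS : 0 < S)
    (t x : ℝ) (ht : 0 ≤ t) (hx : 0 ≤ x) :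
    vpix A R S x ^ 2 ≤ Real.exp (lam A R S * t) * deriv (fun y => phi A R S t y) x ∧
      Real.exp (lam A R S * t) * deriv (fun y => phi A R S t y) x ≤ vpi A R S ^ 2 := by
  have ha := wplus_pos A hR hS
  have hb := wminus_neg A hR hS
  obtain ⟨hDmin, hDmax⟩ := phiDenom_mem_Icc A R S ht x
  have hDlow : -wminus A R S ≤ phiDenom A R S t x := by
    linarith [le_min ha.le hx]
  have hD : 0 < phiDenom A R S t x := by linarith
  have hab : 0 ≤ wplus A R S - wminus A R S := by linarith
  rw [exp_mul_deriv_phi hD.ne', vpix_eq (by linarith), vpi_eq hb.ne]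
  constructor
  · gcongr
    exact div_nonneg hab (by linarith)
  · gcongr
    linarith
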